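/- If T : L(K) → L(H) is a unital positive map with T*σ = σ̂ for faithful states σ, σ̂, then for every a ∈ L(K) with ⟨T(a), T(a)⟩_σ = ⟨a, a⟩_{σ̂}, the Petz recovery map R(x) = σ̂^{-1/2} T*(σ^{1/2} x σ^{1/2}) σ̂^{-1/2} satisfies R(T(a)) = a. -/

import Mathlib

open Matrix ComplexOrder

/-- The positive semidefinite square root of a positive semidefinite matrix
(the definition removed from Mathlib, restored verbatim). -/
noncomputable def Matrix.PosSemidef.sqrt {n : Type*} [Fintype n] [DecidableEq n]
    {𝕜 : Type*} [RCLike 𝕜] {A : Matrix n n 𝕜} (hA : A.PosSemidef) : Matrix n n 𝕜 :=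
  hA.1.eigenvectorUnitary.1 * diagonal ((↑) ∘ (√·) ∘ hA.1.eigenvalues) *
  (star hA.1.eigenvectorUnitary : Matrix n n 𝕜)

/-- The KMS inner product `⟨a,b⟩_τ = tr (τ^{1/2} a* τ^{1/2} b)` relative to a
positive semidefinite matrix `τ`. -/
noncomputable def kmsInner {n : ℕ} {τ : Matrix (Fin n) (Fin n) ℂ}
    (hτ : τ.PosSemidef) (a b : Matrix (Fin n) (Fin n) ℂ) : ℂ :=
  (hτ.sqrt * aᴴ * hτ.sqrt * b).trace

lemma Matrix.PosSemidef.sqrt_mul_self {n : Type*} [Fintype n] [DecidableEq n]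
    {𝕜 : Type*} [RCLike 𝕜] {A : Matrix n n 𝕜} (hA : A.PosSemidef) :
    hA.sqrt * hA.sqrt = A := by
  set U : Matrix n n 𝕜 := hA.1.eigenvectorUnitary.1 with hU
  have hUU : (star hA.1.eigenvectorUnitary : Matrix n n 𝕜) * U = 1 :=
    Unitary.coe_star_mul_self _
  conv_rhs => rw [hA.1.spectral_theorem, Unitary.conjStarAlgAut_apply]
  unfold Matrix.PosSemidef.sqrt
  rw [← hU]
  have hD : diagonal (((↑) ∘ (√·) ∘ hA.1.eigenvalues : n → 𝕜))
      * diagonal ((↑) ∘ (√·) ∘ hA.1.eigenvalues)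
      = diagonal (RCLike.ofReal ∘ hA.1.eigenvalues) := by
    rw [diagonal_mul_diagonal]
    congr 1
    funext i
    simp only [Function.comp_apply]
    rw [← RCLike.ofReal_mul, Real.mul_self_sqrt (hA.eigenvalues_nonneg i)]
  calc U * diagonal ((↑) ∘ (√·) ∘ hA.1.eigenvalues) * (star hA.1.eigenvectorUnitary : Matrix n n 𝕜)
        * (U * diagonal ((↑) ∘ (√·) ∘ hA.1.eigenvalues)
          * (star hA.1.eigenvectorUnitary : Matrix n n 𝕜))
      = U * diagonal ((↑) ∘ (√·) ∘ hA.1.eigenvalues)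
        * ((star hA.1.eigenvectorUnitary : Matrix n n 𝕜) * U)
        * diagonal ((↑) ∘ (√·) ∘ hA.1.eigenvalues)
          * (star hA.1.eigenvectorUnitary : Matrix n n 𝕜) := by
        simp only [Matrix.mul_assoc]
    _ = _ := by
        rw [hUU, Matrix.mul_one, Matrix.mul_assoc U, hD]

lemma Matrix.PosSemidef.posSemidef_sqrt {n : Type*} [Fintype n] [DecidableEq n]
    {𝕜 : Type*} [RCLike 𝕜] {A : Matrix n n 𝕜} (hA : A.PosSemidef) :
    hA.sqrt.PosSemidef := by
  have hd : (diagonal (((↑) ∘ (√·) ∘ hA.1.eigenvalues : n → 𝕜))).PosSemidef := by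
    rw [Matrix.posSemidef_diagonal_iff]
    intro i
    exact RCLike.ofReal_nonneg.mpr (Real.sqrt_nonneg _)
  have := hd.mul_mul_conjTranspose_same hA.1.eigenvectorUnitary.1
  unfold Matrix.PosSemidef.sqrt
  rw [Matrix.star_eq_conjTranspose]
  exact this


lemma smul_one_sub_posSemidef {p : ℕ} {g : Matrix (Fin p) (Fin p) ℂ} (hg : g.IsHermitian)
    {c : ℝ} (hc : ∀ i, |hg.eigenvalues i| ≤ c) :
    ((c:ℂ) • (1 : Matrix (Fin p) (Fin p) ℂ) - g).PosSemidef ∧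
      ((c:ℂ) • (1 : Matrix (Fin p) (Fin p) ℂ) + g).PosSemidef := by
  set U : Matrix (Fin p) (Fin p) ℂ := (hg.eigenvectorUnitary : Matrix (Fin p) (Fin p) ℂ) with hU
  have hUU : U * star U = 1 := Matrix.mem_unitaryGroup_iff.mp hg.eigenvectorUnitary.2
  have hspec : g = U * Matrix.diagonal (RCLike.ofReal ∘ hg.eigenvalues) * star U :=
    hg.spectral_theorem
  have h1 : (c:ℂ) • (1 : Matrix (Fin p) (Fin p) ℂ)
      = U * ((c:ℂ) • (1 : Matrix (Fin p) (Fin p) ℂ)) * star U := by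
    rw [Matrix.mul_smul, Matrix.smul_mul, mul_one, hUU]
  constructor
  · have : (c:ℂ) • (1 : Matrix (Fin p) (Fin p) ℂ) - g
        = U * Matrix.diagonal (fun i => ((c - hg.eigenvalues i : ℝ) : ℂ)) * star U := by
      rw [h1]; nth_rewrite 1 [hspec]
      rw [← Matrix.sub_mul, ← Matrix.mul_sub]
      congr 2
      ext i j
      by_cases hij : i = j <;>
        simp [Matrix.sub_apply, Matrix.smul_apply, Matrix.one_apply, Matrix.diagonal_apply,
          Function.comp, hij, Complex.ofReal_sub]
    rw [this, Matrix.star_eq_conjTranspose]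
    refine Matrix.PosSemidef.mul_mul_conjTranspose_same ?_ U
    rw [Matrix.posSemidef_diagonal_iff]
    intro i
    rw [Complex.zero_le_real]
    have := hc i; have := abs_le.mp this; linarith [this.2]
  · have : (c:ℂ) • (1 : Matrix (Fin p) (Fin p) ℂ) + g
        = U * Matrix.diagonal (fun i => ((c + hg.eigenvalues i : ℝ) : ℂ)) * star U := by
      rw [h1]; nth_rewrite 1 [hspec]
      rw [← Matrix.add_mul, ← Matrix.mul_add]
      congr 2
      ext i j
      by_cases hij : i = j <;>
        simp [Matrix.add_apply, Matrix.smul_apply, Matrix.one_apply, Matrix.diagonal_apply,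
          Function.comp, hij, Complex.ofReal_add]
    rw [this, Matrix.star_eq_conjTranspose]
    refine Matrix.PosSemidef.mul_mul_conjTranspose_same ?_ U
    rw [Matrix.posSemidef_diagonal_iff]
    intro i
    rw [Complex.zero_le_real]
    have := abs_le.mp (hc i); linarith [this.1]

lemma isHermitian_bound {p : ℕ} {g : Matrix (Fin p) (Fin p) ℂ} (hg : g.IsHermitian) :
    ∃ c : ℝ, ((c:ℂ) • (1 : Matrix (Fin p) (Fin p) ℂ) - g).PosSemidef ∧
      ((c:ℂ) • (1 : Matrix (Fin p) (Fin p) ℂ) + g).PosSemidef := by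
  refine ⟨∑ j, |hg.eigenvalues j|, smul_one_sub_posSemidef hg (fun i => ?_) |>.1,
    (smul_one_sub_posSemidef hg (fun i => ?_)).2⟩ <;>
  · exact Finset.single_le_sum (f := fun j => |hg.eigenvalues j|)
      (fun j _ => abs_nonneg _) (Finset.mem_univ i)

lemma trace_mul_ext {p q : ℕ} {M N : Matrix (Fin p) (Fin q) ℂ}
    (h : ∀ y : Matrix (Fin q) (Fin p) ℂ, (M * y).trace = (N * y).trace) : M = N := by
  ext i j
  have := h (Matrix.single j i 1)
  simp only [Matrix.trace, Matrix.diag, Matrix.mul_apply, Matrix.single] at this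
  simpa [ite_and, Finset.sum_ite_eq] using this

lemma posSemidef_vecMulVec {p : ℕ} (v : Fin p → ℂ) :
    (Matrix.vecMulVec v (star v)).PosSemidef := by
  refine Matrix.PosSemidef.of_dotProduct_mulVec_nonneg ?_ ?_
  · ext i j
    simp [Matrix.vecMulVec_apply, Matrix.conjTranspose_apply, mul_comm]
  · intro x
    have : dotProduct (star x) (Matrix.vecMulVec v (star v) *ᵥ x)
        = star (dotProduct (star v) x) * (dotProduct (star v) x) := by
      simp only [dotProduct, Matrix.mulVec, Matrix.vecMulVec_apply, Pi.star_apply,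
        star_sum, star_mul', star_star, Finset.mul_sum, Finset.sum_mul]
      rw [Finset.sum_comm]
      refine Finset.sum_congr rfl fun i _ => Finset.sum_congr rfl fun j _ => by ring
    rw [this]
    exact mul_star_self_nonneg _ |>.trans_eq (by rw [mul_comm])

lemma quadform_eq_trace {p : ℕ} (M : Matrix (Fin p) (Fin p) ℂ) (v : Fin p → ℂ) :
    dotProduct (star v) (M *ᵥ v) = (M * Matrix.vecMulVec v (star v)).trace := by
  simp only [Matrix.trace, Matrix.diag, Matrix.mul_apply, Matrix.vecMulVec_apply,
    dotProduct, Matrix.mulVec, Pi.star_apply, Finset.mul_sum, Finset.sum_mul]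
  refine Finset.sum_congr rfl fun i _ => Finset.sum_congr rfl fun j _ => by ring

lemma psd_trace_nonneg {p : ℕ} {M : Matrix (Fin p) (Fin p) ℂ} (hM : M.PosSemidef) :
    0 ≤ M.trace := by
  have h : ∀ i, 0 ≤ M i i := fun i => by
    simpa [dotProduct, Matrix.mulVec, Pi.single_apply] using hM.dotProduct_mulVec_nonneg (Pi.single i 1)
  exact Finset.sum_nonneg fun i _ => h i

lemma trace_mul_psd_nonneg {p : ℕ} {M N : Matrix (Fin p) (Fin p) ℂ}
    (hM : M.PosSemidef) (hN : N.PosSemidef) : 0 ≤ (M * N).trace := by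
  have h : M * N = hM.sqrt * (hM.sqrt * N) := by
    rw [← Matrix.mul_assoc, hM.sqrt_mul_self]
  rw [h, Matrix.trace_mul_comm]
  have : hM.sqrt * N * hM.sqrt = hM.sqrt * N * (hM.sqrt)ᴴ := by
    rw [hM.posSemidef_sqrt.isHermitian.eq]
  rw [this]
  exact psd_trace_nonneg (hN.mul_mul_conjTranspose_same hM.sqrt)

lemma map_isHermitian {p q : ℕ} (T : Matrix (Fin p) (Fin p) ℂ →ₗ[ℂ] Matrix (Fin q) (Fin q) ℂ)
    (hpos : ∀ a, a.PosSemidef → (T a).PosSemidef)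
    {x : Matrix (Fin p) (Fin p) ℂ} (hx : x.IsHermitian) : (T x).IsHermitian := by
  obtain ⟨c, h1, h2⟩ := isHermitian_bound hx
  have hxeq : x = (2⁻¹ : ℂ) • (((c:ℂ) • 1 + x) - ((c:ℂ) • 1 - x)) := by module
  have hTx : T x = (2⁻¹ : ℂ) • (T ((c:ℂ) • 1 + x) - T ((c:ℂ) • 1 - x)) := by
    nth_rewrite 1 [hxeq]
    rw [_root_.map_smul, map_sub]
  have hH1 := (hpos _ h2).isHermitian
  have hH2 := (hpos _ h1).isHermitian
  have hsub := hH1.sub hH2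
  rw [hTx]
  unfold Matrix.IsHermitian
  rw [Matrix.conjTranspose_smul, hsub.eq]
  norm_num

lemma map_conjTranspose {p q : ℕ}
    (T : Matrix (Fin p) (Fin p) ℂ →ₗ[ℂ] Matrix (Fin q) (Fin q) ℂ)
    (hpos : ∀ a, a.PosSemidef → (T a).PosSemidef)
    (x : Matrix (Fin p) (Fin p) ℂ) : T xᴴ = (T x)ᴴ := by
  have hherm : ((2⁻¹ : ℂ) • (x + xᴴ)).IsHermitian := by
    unfold Matrix.IsHermitian
    rw [Matrix.conjTranspose_smul, Matrix.conjTranspose_add,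
      Matrix.conjTranspose_conjTranspose]
    simp [add_comm]
  have hkerm : ((2⁻¹ : ℂ) • (Complex.I • (xᴴ - x))).IsHermitian := by
    unfold Matrix.IsHermitian
    rw [Matrix.conjTranspose_smul, Matrix.conjTranspose_smul, Matrix.conjTranspose_sub,
      Matrix.conjTranspose_conjTranspose]
    simp only [star_inv₀, RCLike.star_def, Complex.conj_I, neg_smul, smul_neg,
      neg_inj, Complex.conj_ofNat]
    module
  have hIk : Complex.I • ((2⁻¹ : ℂ) • (Complex.I • (xᴴ - x))) = (-2⁻¹ : ℂ) • (xᴴ - x) := by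
    rw [smul_smul, smul_smul]
    congr 1
    rw [mul_comm Complex.I, mul_assoc, Complex.I_mul_I]
    ring
  have hx1 : x = (2⁻¹ : ℂ) • (x + xᴴ) + Complex.I • ((2⁻¹ : ℂ) • (Complex.I • (xᴴ - x))) := by
    rw [hIk]; module
  have hx2 : xᴴ = (2⁻¹ : ℂ) • (x + xᴴ) - Complex.I • ((2⁻¹ : ℂ) • (Complex.I • (xᴴ - x))) := by
    rw [hIk]; module
  have hTh := (map_isHermitian T hpos hherm).eq
  have hTk := (map_isHermitian T hpos hkerm).eq
  calc T xᴴ = T ((2⁻¹ : ℂ) • (x + xᴴ)) - Complex.I • T ((2⁻¹ : ℂ) • (Complex.I • (xᴴ - x))) := by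
        conv_lhs => rw [hx2]
        rw [map_sub, _root_.map_smul T Complex.I]
    _ = (T x)ᴴ := by
        conv_rhs => rw [hx1]
        rw [map_add, _root_.map_smul T Complex.I, Matrix.conjTranspose_add,
          Matrix.conjTranspose_smul, hTh, hTk, RCLike.star_def, Complex.conj_I, neg_smul,
          ← sub_eq_add_neg]

lemma herm_eig_abs_le_one {p : ℕ} (B : Matrix (Fin p) (Fin p) ℂ →ₗ[ℂ] Matrix (Fin p) (Fin p) ℂ)
    (hBpos : ∀ x, x.PosSemidef → (B x).PosSemidef) (hB1 : B 1 = 1)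
    {lam : ℝ} {g : Matrix (Fin p) (Fin p) ℂ} (hg : g.IsHermitian) (hgne : g ≠ 0)
    (hBg : B g = (lam : ℂ) • g) : |lam| ≤ 1 := by
  have hp : p ≠ 0 := by
    rintro rfl
    exact hgne (by ext i; exact i.elim0)
  have : Nonempty (Fin p) := ⟨⟨0, Nat.pos_of_ne_zero hp⟩⟩
  obtain ⟨i₀, -, hmax⟩ := Finset.exists_max_image Finset.univ
    (fun i => |hg.eigenvalues i|) ⟨Classical.arbitrary _, Finset.mem_univ _⟩
  set μ := hg.eigenvalues i₀ with hμ
  set c := |μ| with hc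
  have hcb : ∀ i, |hg.eigenvalues i| ≤ c := fun i => hmax i (Finset.mem_univ i)
  have hμne : μ ≠ 0 := by
    intro h0
    apply hgne
    have hall : ∀ i, hg.eigenvalues i = 0 := fun i => by
      have := hcb i; rw [hc, h0, abs_zero] at this
      exact abs_nonpos_iff.mp this
    have hzero : Matrix.diagonal (RCLike.ofReal ∘ hg.eigenvalues)
        = (0 : Matrix (Fin p) (Fin p) ℂ) := by
      ext i j; by_cases hij : i = j <;> simp [Matrix.diagonal_apply, hij, hall]
    have := hg.spectral_theorem
    rw [hzero, Unitary.conjStarAlgAut_apply, Matrix.mul_zero, Matrix.zero_mul] at this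
    exact this
  obtain ⟨h1, h2⟩ := smul_one_sub_posSemidef hg hcb
  have hB1' : B ((c:ℂ) • 1 - g) = (c:ℂ) • 1 - (lam:ℂ) • g := by
    rw [map_sub, _root_.map_smul, hB1, hBg]
  have hB2' : B ((c:ℂ) • 1 + g) = (c:ℂ) • 1 + (lam:ℂ) • g := by
    rw [map_add, _root_.map_smul, hB1, hBg]
  have hP1 := hBpos _ h1; rw [hB1'] at hP1
  have hP2 := hBpos _ h2; rw [hB2'] at hP2
  set v : Fin p → ℂ := ⇑(hg.eigenvectorBasis i₀) with hv
  have hvv : dotProduct (star v) v = 1 := by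
    have hnorm : ‖hg.eigenvectorBasis i₀‖ = 1 := hg.eigenvectorBasis.orthonormal.1 i₀
    have h2 : (inner ℂ (hg.eigenvectorBasis i₀) (hg.eigenvectorBasis i₀) : ℂ)
        = dotProduct (star v) v :=
      (EuclideanSpace.inner_eq_star_dotProduct _ _).trans (dotProduct_comm _ _)
    rw [← h2, inner_self_eq_norm_sq_to_K, hnorm]
    norm_num
  have hgv : g *ᵥ v = (μ:ℂ) • v := by
    have h3 := hg.mulVec_eigenvectorBasis i₀
    rw [← hv] at h3
    rw [h3, RCLike.real_smul_eq_coe_smul (K := ℂ)]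
    rfl
  have key : ∀ w : ℝ, ((c:ℂ) • (1 : Matrix (Fin p) (Fin p) ℂ) + (w:ℂ) • g).PosSemidef →
      -c ≤ w * μ := by
    intro w hP
    have hq := hP.dotProduct_mulVec_nonneg v
    rw [Matrix.add_mulVec, Matrix.smul_mulVec, Matrix.one_mulVec,
      Matrix.smul_mulVec, hgv, smul_smul] at hq
    rw [dotProduct_add, dotProduct_smul, dotProduct_smul, hvv] at hq
    have hq2 : (0:ℂ) ≤ ((c + w * μ : ℝ) : ℂ) := by
      convert hq using 1
      push_cast
      simp [smul_eq_mul]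
    rw [Complex.zero_le_real] at hq2
    linarith
  have k2 : -c ≤ lam * μ := key lam hP2
  have k1 : -c ≤ -lam * μ := by
    apply key
    have hng : ((-lam : ℝ) : ℂ) • g = -((lam:ℂ) • g) := by push_cast; rw [neg_smul]
    rw [hng, ← sub_eq_add_neg]
    exact hP1
  have habs : |lam| * |μ| ≤ |μ| := by
    rw [← abs_mul]
    rw [hc] at k1 k2
    refine abs_le.mpr ⟨k2, by linarith⟩
  have hμpos : 0 < |μ| := abs_pos.mpr hμne
  exact le_of_mul_le_mul_right (by linarith) hμpos

lemma eig_le_one {p : ℕ} (B : Matrix (Fin p) (Fin p) ℂ →ₗ[ℂ] Matrix (Fin p) (Fin p) ℂ)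
    (hBpos : ∀ x, x.PosSemidef → (B x).PosSemidef) (hB1 : B 1 = 1)
    (hBstar : ∀ x, B xᴴ = (B x)ᴴ)
    {lam : ℝ} {x : Matrix (Fin p) (Fin p) ℂ} (hx : x ≠ 0)
    (hBx : B x = (lam : ℂ) • x) : lam ≤ 1 := by
  have hBxH : B xᴴ = (lam : ℂ) • xᴴ := by
    rw [hBstar, hBx, Matrix.conjTranspose_smul, RCLike.star_def, Complex.conj_ofReal]
  have hherm : (x + xᴴ).IsHermitian := by
    show (x + xᴴ)ᴴ = x + xᴴ
    rw [Matrix.conjTranspose_add, Matrix.conjTranspose_conjTranspose, add_comm]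
  have hkerm : (Complex.I • x - Complex.I • xᴴ).IsHermitian := by
    show (Complex.I • x - Complex.I • xᴴ)ᴴ = _
    rw [Matrix.conjTranspose_sub, Matrix.conjTranspose_smul, Matrix.conjTranspose_smul,
      Matrix.conjTranspose_conjTranspose, RCLike.star_def, Complex.conj_I, neg_smul, neg_smul,
      sub_neg_eq_add, neg_add_eq_sub]
  have hBh : B (x + xᴴ) = (lam : ℂ) • (x + xᴴ) := by
    rw [map_add, hBx, hBxH, smul_add]
  have hBk : B (Complex.I • x - Complex.I • xᴴ)
      = (lam : ℂ) • (Complex.I • x - Complex.I • xᴴ) := by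
    rw [map_sub, _root_.map_smul, _root_.map_smul, hBx, hBxH, smul_sub,
      smul_comm Complex.I, smul_comm Complex.I]
  by_cases hh0 : x + xᴴ = 0
  · have hk0 : Complex.I • x - Complex.I • xᴴ ≠ 0 := by
      intro hk
      apply hx
      have h2 : x - xᴴ = 0 := by
        have := congrArg (fun M => (-Complex.I) • M) hk
        simpa [smul_smul, smul_sub, Complex.I_mul_I, neg_neg] using this
      have h3 : x + xᴴ + (x - xᴴ) = 0 := by rw [hh0, h2, add_zero]
      have h4 : (2:ℂ) • x = 0 := by
        rw [two_smul]
        rw [show x + x = x + xᴴ + (x - xᴴ) by abel] 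
        exact h3
      have := congrArg (fun M => (2⁻¹ : ℂ) • M) h4
      simpa [smul_smul] using this
    have := herm_eig_abs_le_one B hBpos hB1 hkerm hk0 hBk
    exact (abs_le.mp this).2
  · have := herm_eig_abs_le_one B hBpos hB1 hherm hh0 hBh
    exact (abs_le.mp this).2

lemma kmsInner_conj {k : ℕ} {τ : Matrix (Fin k) (Fin k) ℂ} (hτ : τ.PosSemidef)
    (a b : Matrix (Fin k) (Fin k) ℂ) :
    star (kmsInner hτ a b) = kmsInner hτ b a := by
  unfold kmsInner
  rw [← Matrix.trace_conjTranspose]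
  rw [Matrix.conjTranspose_mul, Matrix.conjTranspose_mul, Matrix.conjTranspose_mul,
    Matrix.conjTranspose_conjTranspose, hτ.posSemidef_sqrt.isHermitian.eq]
  rw [show bᴴ * (hτ.sqrt * (a * hτ.sqrt)) = bᴴ * hτ.sqrt * a * hτ.sqrt by
    simp [Matrix.mul_assoc]]
  rw [Matrix.trace_mul_cycle]
  simp [Matrix.mul_assoc]

lemma trace_conjTranspose_mul {k : ℕ} (A B : Matrix (Fin k) (Fin k) ℂ) :
    (Aᴴ * B).trace = ∑ pr : Fin k × Fin k, (starRingEnd ℂ) (A pr.1 pr.2) * B pr.1 pr.2 := by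
  rw [Fintype.sum_prod_type]
  simp only [Matrix.trace, Matrix.diag, Matrix.mul_apply, Matrix.conjTranspose_apply]
  rw [Finset.sum_comm]
  refine Finset.sum_congr rfl fun i _ => Finset.sum_congr rfl fun j _ => by
    simp [RCLike.star_def]

noncomputable def matToEuc {m : ℕ} (c : Matrix (Fin m) (Fin m) ℂ) :
    Matrix (Fin m) (Fin m) ℂ →ₗ[ℂ] EuclideanSpace ℂ (Fin m × Fin m) where
  toFun x := WithLp.toLp 2 (fun pr => (c * x * c) pr.1 pr.2)
  map_add' x y := by
    ext pr
    simp [Matrix.mul_add, Matrix.add_mul, Matrix.add_apply]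
  map_smul' r x := by
    ext pr
    simp [Matrix.mul_smul, Matrix.smul_mul, Matrix.smul_apply]

noncomputable def eucToMat {m : ℕ} (c : Matrix (Fin m) (Fin m) ℂ) :
    EuclideanSpace ℂ (Fin m × Fin m) →ₗ[ℂ] Matrix (Fin m) (Fin m) ℂ where
  toFun u := c * Matrix.of (fun i j => u (i, j)) * c
  map_add' u v := by
    dsimp only
    have : (Matrix.of (fun i j => (u + v) (i, j)) : Matrix (Fin m) (Fin m) ℂ)
        = Matrix.of (fun i j => u (i, j)) + Matrix.of (fun i j => v (i, j)) := by
      ext i j; simp [PiLp.add_apply]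
    rw [this, Matrix.mul_add, Matrix.add_mul]
  map_smul' r u := by
    dsimp only
    have : (Matrix.of (fun i j => (r • u) (i, j)) : Matrix (Fin m) (Fin m) ℂ)
        = r • Matrix.of (fun i j => u (i, j)) := by
      ext i j; simp [PiLp.smul_apply]
    rw [this, RingHom.id_apply, Matrix.mul_smul, Matrix.smul_mul]


/-- If `T` is unital positive with `T* σ = σ̂` for faithful states `σ, σ̂`,
then every `a` whose KMS norm is preserved by `T` is recovered by the Petz
recovery map `R x = σ̂^{-1/2} T*(σ^{1/2} x σ^{1/2}) σ̂^{-1/2}`. -/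
theorem petz_recovery_of_kms_isometry {n m : ℕ}
    (T : Matrix (Fin m) (Fin m) ℂ →ₗ[ℂ] Matrix (Fin n) (Fin n) ℂ)
    (T' : Matrix (Fin n) (Fin n) ℂ →ₗ[ℂ] Matrix (Fin m) (Fin m) ℂ)
    (hadj : ∀ (x : Matrix (Fin n) (Fin n) ℂ) (y : Matrix (Fin m) (Fin m) ℂ),
        (T' x * y).trace = (x * T y).trace)
    (hpos : ∀ a : Matrix (Fin m) (Fin m) ℂ, a.PosSemidef → (T a).PosSemidef)
    (hunital : T 1 = 1)
    (σ : Matrix (Fin n) (Fin n) ℂ) (hσ : σ.PosDef) (hσtr : σ.trace = 1)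
    (hσhat : (T' σ).PosDef)
    (a : Matrix (Fin m) (Fin m) ℂ)
    (hisom : kmsInner hσ.posSemidef (T a) (T a)
        = kmsInner hσhat.posSemidef a a) :
    (hσhat.posSemidef.sqrt)⁻¹
        * T' (hσ.posSemidef.sqrt * T a * hσ.posSemidef.sqrt)
        * (hσhat.posSemidef.sqrt)⁻¹ = a := by
  classical
  set q : Matrix (Fin n) (Fin n) ℂ := hσ.posSemidef.sqrt with hqdef
  set qh : Matrix (Fin m) (Fin m) ℂ := hσhat.posSemidef.sqrt with hqhdef
  set ch : Matrix (Fin m) (Fin m) ℂ := hσhat.posSemidef.posSemidef_sqrt.sqrt with hchdef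
  have hqH : q.IsHermitian := hσ.posSemidef.posSemidef_sqrt.isHermitian
  have hqhH : qh.IsHermitian := hσhat.posSemidef.posSemidef_sqrt.isHermitian
  have hchH : ch.IsHermitian :=
    hσhat.posSemidef.posSemidef_sqrt.posSemidef_sqrt.isHermitian
  have hq2 : q * q = σ := hσ.posSemidef.sqrt_mul_self
  have hqh2 : qh * qh = T' σ := hσhat.posSemidef.sqrt_mul_self
  have hch2 : ch * ch = qh := hσhat.posSemidef.posSemidef_sqrt.sqrt_mul_self
  have hdetσh : IsUnit (T' σ).det := (Matrix.isUnit_iff_isUnit_det _).mp hσhat.isUnit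
  have hdetqh : IsUnit qh.det := by
    have h := hdetσh
    rw [← hqh2, Matrix.det_mul] at h
    exact isUnit_of_mul_isUnit_left h
  have hdetch : IsUnit ch.det := by
    have h := hdetqh
    rw [← hch2, Matrix.det_mul] at h
    exact isUnit_of_mul_isUnit_left h
  -- the composed map B = R ∘ T
  set B : Matrix (Fin m) (Fin m) ℂ →ₗ[ℂ] Matrix (Fin m) (Fin m) ℂ :=
    { toFun := fun x => qh⁻¹ * T' (q * T x * q) * qh⁻¹
      map_add' := fun x y => by
        simp only [map_add, Matrix.mul_add, Matrix.add_mul]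
      map_smul' := fun r x => by
        simp only [_root_.map_smul, RingHom.id_apply, Matrix.mul_smul, Matrix.smul_mul] }
    with hBdef
  have hBapply : ∀ x, B x = qh⁻¹ * T' (q * T x * q) * qh⁻¹ := fun _ => rfl
  have Tstar : ∀ x, T xᴴ = (T x)ᴴ := map_conjTranspose T hpos
  have T'star : ∀ x, T' xᴴ = (T' x)ᴴ := by
    intro x
    apply trace_mul_ext
    intro y
    rw [hadj]
    have h1 : ((T' x)ᴴ * y).trace = star ((T' x * yᴴ).trace) := by
      rw [← Matrix.trace_conjTranspose, Matrix.conjTranspose_mul,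
        Matrix.conjTranspose_conjTranspose, Matrix.trace_mul_comm]
    rw [h1, hadj, Tstar]
    rw [← Matrix.trace_conjTranspose, Matrix.conjTranspose_mul,
      Matrix.conjTranspose_conjTranspose, Matrix.trace_mul_comm]
  have T'pos : ∀ x, x.PosSemidef → (T' x).PosSemidef := by
    intro x hx
    refine Matrix.PosSemidef.of_dotProduct_mulVec_nonneg ?_ ?_
    · show (T' x)ᴴ = T' x
      rw [← T'star, hx.isHermitian.eq]
    · intro v
      rw [quadform_eq_trace, hadj]
      exact trace_mul_psd_nonneg hx (hpos _ (posSemidef_vecMulVec v))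
  have hqhinvH : (qh⁻¹)ᴴ = qh⁻¹ := by rw [Matrix.conjTranspose_nonsing_inv, hqhH.eq]
  have Bpos : ∀ x, x.PosSemidef → (B x).PosSemidef := by
    intro x hx
    have h1 : (q * T x * q).PosSemidef := by
      have h := (hpos x hx).mul_mul_conjTranspose_same q
      rwa [hqH.eq] at h
    have h2 := (T'pos _ h1).mul_mul_conjTranspose_same qh⁻¹
    rwa [hqhinvH] at h2
  have B1 : B (1 : Matrix (Fin m) (Fin m) ℂ) = 1 := by
    rw [hBapply, hunital, Matrix.mul_one, hq2, ← hqh2,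
      Matrix.nonsing_inv_mul_cancel_left _ _ hdetqh, Matrix.mul_nonsing_inv _ hdetqh]
  have Bstar : ∀ x, B xᴴ = (B x)ᴴ := map_conjTranspose B Bpos
  -- KMS adjoint identity
  have hAdj : ∀ x y, kmsInner hσhat.posSemidef x (B y)
      = kmsInner hσ.posSemidef (T x) (T y) := by
    intro x y
    show (hσhat.posSemidef.sqrt * xᴴ * hσhat.posSemidef.sqrt * B y).trace
      = (hσ.posSemidef.sqrt * (T x)ᴴ * hσ.posSemidef.sqrt * T y).trace
    rw [← hqhdef, ← hqdef, hBapply]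
    set W : Matrix (Fin m) (Fin m) ℂ := T' (q * T y * q) with hWdef
    have hstep1 : qh * xᴴ * qh * (qh⁻¹ * W * qh⁻¹) = qh * xᴴ * W * qh⁻¹ := by
      rw [Matrix.mul_assoc qh⁻¹ W qh⁻¹, ← Matrix.mul_assoc (qh * xᴴ * qh) qh⁻¹ (W * qh⁻¹),
        Matrix.mul_nonsing_inv_cancel_right _ _ hdetqh, Matrix.mul_assoc (qh * xᴴ) W qh⁻¹,
        ← Matrix.mul_assoc]
    rw [hstep1]
    have hstep2 : (qh * xᴴ * W * qh⁻¹).trace = (xᴴ * W).trace := by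
      rw [Matrix.trace_mul_comm, ← Matrix.mul_assoc, ← Matrix.mul_assoc,
        Matrix.nonsing_inv_mul _ hdetqh, Matrix.one_mul]
    rw [hstep2, Matrix.trace_mul_comm, hWdef, hadj, Tstar, Matrix.trace_mul_cycle]
    simp only [Matrix.mul_assoc]
    rw [Matrix.trace_mul_comm q]
    simp only [Matrix.mul_assoc]
  have hBsym : ∀ x y, kmsInner hσhat.posSemidef (B x) y
      = kmsInner hσhat.posSemidef x (B y) := by
    intro x y
    rw [← kmsInner_conj hσhat.posSemidef y (B x), hAdj y x,
      kmsInner_conj hσ.posSemidef (T y) (T x)]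
    exact (hAdj x y).symm
  -- Euclidean-space conjugated operator
  have hee1 : (matToEuc ch).comp (eucToMat ch⁻¹) = LinearMap.id := by
    apply LinearMap.ext
    intro u
    ext pr
    show (ch * (ch⁻¹ * Matrix.of (fun i j => u (i, j)) * ch⁻¹) * ch) pr.1 pr.2 = u pr
    rw [Matrix.mul_assoc ch⁻¹ (Matrix.of (fun i j => u (i, j))) ch⁻¹,
      Matrix.mul_nonsing_inv_cancel_left _ _ hdetch,
      Matrix.nonsing_inv_mul_cancel_right _ _ hdetch]
    rfl
  have hee2 : (eucToMat ch⁻¹).comp (matToEuc ch) = LinearMap.id := by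
    apply LinearMap.ext
    intro x
    show ch⁻¹ * Matrix.of (fun i j => (ch * x * ch) i j) * ch⁻¹ = x
    have : Matrix.of (fun i j => (ch * x * ch) i j) = ch * x * ch := rfl
    rw [this, Matrix.mul_assoc ch x ch, Matrix.nonsing_inv_mul_cancel_left _ _ hdetch,
      Matrix.mul_nonsing_inv_cancel_right _ _ hdetch]
  set e : Matrix (Fin m) (Fin m) ℂ ≃ₗ[ℂ] EuclideanSpace ℂ (Fin m × Fin m) :=
    LinearEquiv.ofLinear (matToEuc ch) (eucToMat ch⁻¹) hee1 hee2 with hedef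
  have hinner : ∀ x y : Matrix (Fin m) (Fin m) ℂ,
      (inner ℂ (e x) (e y) : ℂ) = kmsInner hσhat.posSemidef x y := by
    intro x y
    have htr : kmsInner hσhat.posSemidef x y = ((ch * x * ch)ᴴ * (ch * y * ch)).trace := by
      show (hσhat.posSemidef.sqrt * xᴴ * hσhat.posSemidef.sqrt * y).trace = _
      rw [← hqhdef]
      have hAB : (ch * x * ch)ᴴ * (ch * y * ch) = ch * xᴴ * ch * (ch * y) * ch := by
        rw [Matrix.conjTranspose_mul, Matrix.conjTranspose_mul, hchH.eq]
        simp only [Matrix.mul_assoc]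
      rw [hAB, Matrix.trace_mul_comm, ← hch2]
      simp only [Matrix.mul_assoc]
      rw [Matrix.trace_mul_comm y]
      simp only [Matrix.mul_assoc]
      conv_lhs => rw [Matrix.trace_mul_comm]
      simp only [Matrix.mul_assoc]
    rw [htr, trace_conjTranspose_mul, PiLp.inner_apply]
    refine Finset.sum_congr rfl fun pr _ => ?_
    exact RCLike.inner_apply' _ _
  set Bt : EuclideanSpace ℂ (Fin m × Fin m) →ₗ[ℂ] EuclideanSpace ℂ (Fin m × Fin m) :=
    e.toLinearMap ∘ₗ B ∘ₗ e.symm.toLinearMap with hBtdef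
  have hBt : ∀ u, Bt u = e (B (e.symm u)) := fun _ => rfl
  have hsymBt : Bt.IsSymmetric := by
    intro u w
    rw [hBt u, hBt w]
    conv_lhs => rw [← e.apply_symm_apply w]
    conv_rhs => rw [← e.apply_symm_apply u]
    rw [hinner, hinner, hBsym]
  have hrank : Module.finrank ℂ (EuclideanSpace ℂ (Fin m × Fin m))
      = Fintype.card (Fin m × Fin m) := finrank_euclideanSpace
  set vB := hsymBt.eigenvectorBasis hrank with hvBdef
  set lam := hsymBt.eigenvalues hrank with hlamdef
  have hlam_le : ∀ i, lam i ≤ 1 := by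
    intro i
    have hev : Bt (vB i) = (lam i : ℂ) • vB i := hsymBt.apply_eigenvectorBasis hrank i
    have hvne : vB i ≠ 0 := vB.orthonormal.ne_zero i
    have hxne : e.symm (vB i) ≠ 0 := by
      intro h0
      apply hvne
      have := congrArg e h0
      rwa [e.apply_symm_apply, map_zero] at this
    have hBx : B (e.symm (vB i)) = ((lam i : ℝ) : ℂ) • e.symm (vB i) := by
      apply e.injective
      rw [_root_.map_smul, e.apply_symm_apply, ← hBt, hev]
    exact eig_le_one B Bpos B1 Bstar hxne hBx
  set u : EuclideanSpace ℂ (Fin m × Fin m) := e a with hudef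
  have hu : (inner ℂ u (Bt u) : ℂ) = inner ℂ u u := by
    have h1 : Bt u = e (B a) := by rw [hBt, hudef, e.symm_apply_apply]
    rw [h1, hudef, hinner, hinner, hAdj a a, hisom]
  have hrepr : ∀ w₁ w₂ : EuclideanSpace ℂ (Fin m × Fin m), (inner ℂ w₁ w₂ : ℂ)
      = ∑ i, (starRingEnd ℂ) (vB.repr w₁ i) * (vB.repr w₂ i) := by
    intro w₁ w₂
    rw [← vB.repr.inner_map_map w₁ w₂, PiLp.inner_apply]
    exact Finset.sum_congr rfl fun i _ => RCLike.inner_apply' _ _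
  have heig : ∀ i, vB.repr (Bt u) i = (lam i : ℂ) * vB.repr u i :=
    fun i => hsymBt.eigenvectorBasis_apply_self_apply hrank u i
  have hsum : ∑ i, (1 - lam i) * Complex.normSq (vB.repr u i) = 0 := by
    have h1 := hu
    rw [hrepr u (Bt u), hrepr u u] at h1
    have h2 : ((∑ i, (1 - lam i) * Complex.normSq (vB.repr u i) : ℝ) : ℂ) = 0 := by
      push_cast
      have h3 : ∀ i ∈ Finset.univ, ((1:ℂ) - (lam i : ℂ)) * ((Complex.normSq (vB.repr u i) : ℝ) : ℂ)
          = (starRingEnd ℂ) (vB.repr u i) * vB.repr u i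
            - (starRingEnd ℂ) (vB.repr u i) * vB.repr (Bt u) i := by
        intro i _
        rw [heig i, Complex.normSq_eq_conj_mul_self]
        ring
      rw [Finset.sum_congr rfl h3, Finset.sum_sub_distrib, h1, sub_self]
    exact_mod_cast h2
  have hfix : ∀ i, (lam i : ℂ) * vB.repr u i = vB.repr u i := by
    intro i
    have hz := (Finset.sum_eq_zero_iff_of_nonneg (fun i _ =>
      mul_nonneg (by linarith [hlam_le i]) (Complex.normSq_nonneg _))).mp hsum i
      (Finset.mem_univ i)
    rcases mul_eq_zero.mp hz with h | h
    · have h1 : lam i = 1 := by linarith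
      rw [h1]; norm_num
    · rw [Complex.normSq_eq_zero] at h
      rw [h, mul_zero]
  have hBtu : Bt u = u := by
    apply vB.repr.injective
    ext i
    rw [heig i, hfix i]
  have hBa : B a = a := by
    apply e.injective
    have h4 : Bt u = e (B a) := by rw [hBt, hudef, e.symm_apply_apply]
    rw [← h4, hBtu, hudef]
  rw [← hBapply a]
  exact hBa
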